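/- Let F_q be a finite field with q elements and n odd, α = (-1)^{(n+1)/2}. Then N_{A_n}(α) = (q^{(n+1)/2} - 1)(q^{(n+3)/2} - 1)/(q² - 1) + q^{(n+1)/2}. -/

import Mathlib

/-- Extension of `x : Fin n → F` to all of `ℕ`, with value `1` outside `{1, …, n}`
(1-indexed: `extA x k = x (k-1)` for `1 ≤ k ≤ n`). -/
def extA {F : Type*} [One F] {n : ℕ} (x : Fin n → F) (k : ℕ) : F :=
  if h : 1 ≤ k ∧ k ≤ n then x ⟨k - 1, by omega⟩ else 1

/-- Number of points over `F` of the type `Aₙ` variety `X_{Aₙ}(α, 1, …, 1)`: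
solutions of `xₖ xₖ' = 1 + cₖ x_{k-1} x_{k+1}` with `c₁ = α`, `cₖ = 1` otherwise,
and the convention `x₀ = x_{n+1} = 1`. -/
noncomputable def NA (F : Type*) [Field F] (n : ℕ) (α : F) : ℕ :=
  Nat.card {p : (Fin n → F) × (Fin n → F) //
    ∀ k, 1 ≤ k → k ≤ n →
      extA p.1 k * extA p.2 k =
        1 + (if k = 1 then α else 1) * extA p.1 (k - 1) * extA p.1 (k + 1)}

/-!
Splitting the solutions according to the value `u` of `x₁` gives the recursion
`N_{n+2}(α) = ∑_{u ≠ 0} N_{n+1}(u) + q N_n(-α⁻¹)` for `α ≠ 0`: when `u ≠ 0` the unknown `x₁'`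
is determined and the remaining equations form the system `A_{n+1}(u)`; when `u = 0`, `x₁'` is
free, `x₂ = -α⁻¹`, `x₂' = -α`, and what is left is the system `A_n(-α⁻¹)`.
A joint induction then gives `(q² - 1) N_{2m}(α) = q^{2m+2} - 1` for every `α ≠ 0`, and
`(q² - 1) N_{2m+1}(α) = (q^{m+1} - 1)(q^{m+2} - 1)`, plus `q^{m+1}(q² - 1)` exactly when
`α = (-1)^{m+1}`: in the odd step the exceptional value is transported by `α ↦ -α⁻¹`.
-/

open Finset

section extA
variable {M : Type*} [One M]

lemma extA_zero {n : ℕ} (x : Fin n → M) : extA x 0 = 1 := dif_neg (by omega)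

lemma extA_of_lt {n k : ℕ} (x : Fin n → M) (h : n < k) : extA x k = 1 := dif_neg (by omega)

lemma extA_one {n : ℕ} (x : Fin (n + 1) → M) : extA x 1 = x 0 := dif_pos ⟨le_rfl, by omega⟩

lemma extA_tail {n k : ℕ} (x : Fin (n + 1) → M) (hk : 1 ≤ k) :
    extA (Fin.tail x) k = extA x (k + 1) := by
  by_cases hkn : k ≤ n
  · rw [extA, dif_pos ⟨hk, hkn⟩, extA, dif_pos ⟨by omega, by omega⟩]
    exact congrArg x (Fin.ext (by simp; omega))
  · rw [extA_of_lt _ (by omega), extA_of_lt _ (by omega)]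

end extA

section LinearEquation
variable {Y : Type*}

lemma Nat.card_mul_fst_eq_of_ne_zero {G₀ : Type*} [GroupWithZero G₀] {a : G₀} (ha : a ≠ 0)
    (f : Y → G₀) : Nat.card {t : G₀ × Y // a * t.1 = f t.2} = Nat.card Y :=
  Nat.card_congr
    { toFun t := t.1.2
      invFun y := ⟨(a⁻¹ * f y, y), mul_inv_cancel_left₀ ha _⟩
      left_inv t := Subtype.ext (Prod.ext (by simp [← t.2, ha]) rfl)
      right_inv _ := rfl }

lemma Nat.card_zero_mul_fst_eq {M : Type*} [MulZeroClass M] (f : Y → M) :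
    Nat.card {t : M × Y // 0 * t.1 = f t.2} = Nat.card M * Nat.card {y // f y = 0} := by
  rw [← Nat.card_prod]
  exact Nat.card_congr
    { toFun t := (t.1.1, ⟨t.1.2, by simpa using t.2.symm⟩)
      invFun p := ⟨(p.1, p.2.1), by simp [p.2.2]⟩
      left_inv _ := rfl
      right_inv _ := rfl }

end LinearEquation

lemma one_add_mul_eq_zero_iff {K : Type*} [DivisionRing K] {α u : K} (hα : α ≠ 0) :
    1 + α * u = 0 ↔ u = -α⁻¹ := by
  rw [add_comm, add_eq_zero_iff_eq_neg, ← eq_inv_mul_iff_mul_eq₀ hα, mul_neg_one]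

lemma neg_inv_eq_neg_one_pow_iff {K : Type*} [DivisionRing K] {α : K} (k : ℕ) :
    -α⁻¹ = (-1) ^ k ↔ α = (-1) ^ (k + 1) := by
  rw [neg_eq_iff_eq_neg, ← neg_one_mul, ← pow_succ', inv_eq_iff_eq_inv, ← inv_pow, inv_neg_one]

section Solutions
variable {F : Type*} [Field F]

def IsSolA (n : ℕ) (α : F) (p : (Fin n → F) × (Fin n → F)) : Prop :=
  ∀ k, 1 ≤ k → k ≤ n →
    extA p.1 k * extA p.2 k = 1 + (if k = 1 then α else 1) * extA p.1 (k - 1) * extA p.1 (k + 1)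

abbrev SolA (n : ℕ) (α : F) : Type _ := {p : (Fin n → F) × (Fin n → F) // IsSolA n α p}

lemma NA_eq_card_solA (n : ℕ) (α : F) : NA F n α = Nat.card (SolA n α) := rfl

lemma NA_zero (α : F) : NA F 0 α = 1 := by
  have : Nonempty (SolA 0 α) := ⟨⟨(Fin.elim0, Fin.elim0), fun _ _ _ => by omega⟩⟩
  rw [NA_eq_card_solA]
  exact Nat.card_unique

/-- The first equation involves `x₁, x₁', x₂` only, and the others are the system `A_n(x₁)` in
`(x₂, …)`, since `x₂ x₂' = 1 + x₁ x₃`. -/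
lemma isSolA_succ_iff {n : ℕ} {α : F} {x x' : Fin (n + 1) → F} :
    IsSolA (n + 1) α (x, x') ↔
      x 0 * x' 0 = 1 + α * extA (Fin.tail x) 1 ∧ IsSolA n (x 0) (Fin.tail x, Fin.tail x') := by
  have first : x 0 * x' 0 = 1 + α * extA (Fin.tail x) 1 ↔
      extA x 1 * extA x' 1 = 1 + (if 1 = 1 then α else 1) * extA x (1 - 1) * extA x (1 + 1) := by
    rw [if_pos rfl, Nat.sub_self, extA_one, extA_one, extA_zero, extA_tail x le_rfl, mul_one]
  have coeff : ∀ j, 1 ≤ j → (if j = 1 then x 0 else 1) * extA (Fin.tail x) (j - 1) = extA x j := by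
    intro j hj
    rcases eq_or_ne j 1 with rfl | hj1
    · rw [if_pos rfl, extA_zero, extA_one, mul_one]
    · rw [if_neg hj1, one_mul, extA_tail x (by omega), Nat.sub_add_cancel hj]
  have shifted : ∀ j, 1 ≤ j →
      (extA (Fin.tail x) j * extA (Fin.tail x') j =
          1 + (if j = 1 then x 0 else 1) * extA (Fin.tail x) (j - 1) * extA (Fin.tail x) (j + 1) ↔
        extA x (j + 1) * extA x' (j + 1) =
          1 + (if j + 1 = 1 then α else 1) * extA x (j + 1 - 1) * extA x (j + 1 + 1)) := by
    intro j hj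
    rw [coeff j hj, extA_tail x hj, extA_tail x' hj, extA_tail x (by omega),
      if_neg (by omega), Nat.add_sub_cancel, one_mul]
  constructor
  · intro h
    exact ⟨first.2 (h 1 le_rfl (by omega)),
      fun j hj hjn => (shifted j hj).2 (h (j + 1) (by omega) (by omega))⟩
  · rintro ⟨h₁, h⟩ k hk hkn
    obtain ⟨j, rfl⟩ : ∃ j, k = j + 1 := ⟨k - 1, by omega⟩
    rcases j.eq_zero_or_pos with rfl | hj
    · exact first.1 h₁
    · exact (shifted j hj).1 (h j hj (by omega))

def solASuccEquiv (n : ℕ) (α : F) :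
    SolA (n + 1) α ≃ Σ u : F, {t : F × SolA n u // u * t.1 = 1 + α * extA t.2.1.1 1} where
  toFun p := ⟨p.1.1 0, ⟨p.1.2 0, ⟨(Fin.tail p.1.1, Fin.tail p.1.2), (isSolA_succ_iff.1 p.2).2⟩⟩,
    (isSolA_succ_iff.1 p.2).1⟩
  invFun σ := ⟨(Fin.cons σ.1 σ.2.1.2.1.1, Fin.cons σ.2.1.1 σ.2.1.2.1.2),
    isSolA_succ_iff.2 ⟨σ.2.2, σ.2.1.2.2⟩⟩
  left_inv p := by simp
  right_inv σ := rfl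

lemma NA_succ [Fintype F] [DecidableEq F] (n : ℕ) (α : F) :
    NA F (n + 1) α = ∑ u ∈ univ.erase 0, NA F n u +
      Fintype.card F * Nat.card {s : SolA n (0 : F) // 1 + α * extA s.1.1 1 = 0} := by
  rw [NA_eq_card_solA, Nat.card_congr (solASuccEquiv n α), Nat.card_sigma,
    ← add_sum_erase _ _ (mem_univ 0), add_comm]
  congr 1
  · refine sum_congr rfl fun u hu => ?_
    rw [NA_eq_card_solA]
    exact Nat.card_mul_fst_eq_of_ne_zero (ne_of_mem_erase hu)
      fun s : SolA n u => 1 + α * extA s.1.1 1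
  · rw [Nat.card_zero_mul_fst_eq fun s : SolA n 0 => 1 + α * extA s.1.1 1,
      Nat.card_eq_fintype_card]

lemma card_zeroFiber_zero [DecidableEq F] (α : F) :
    Nat.card {s : SolA 0 (0 : F) // 1 + α * extA s.1.1 1 = 0} = if α = -1 then 1 else 0 := by
  have hs : ∀ s : SolA 0 (0 : F), 1 + α * extA s.1.1 1 = 0 ↔ α = -1 := fun s => by
    rw [extA_of_lt _ zero_lt_one, mul_one, add_eq_zero_iff_neg_eq, eq_comm]
  simp only [hs]
  split_ifs with h <;> simp [h, ← NA_eq_card_solA, NA_zero]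

lemma card_zeroFiber_succ {n : ℕ} {α : F} (hα : α ≠ 0) :
    Nat.card {s : SolA (n + 1) (0 : F) // 1 + α * extA s.1.1 1 = 0} = NA F n (-α⁻¹) := by
  have hfib : ∀ s : SolA (n + 1) (0 : F),
      1 + α * extA s.1.1 1 = 0 ↔ (solASuccEquiv n 0 s).1 = -α⁻¹ := fun s => by
    rw [extA_one]
    exact one_add_mul_eq_zero_iff hα
  rw [Nat.card_congr (((solASuccEquiv n 0).subtypeEquiv hfib).trans (Equiv.sigmaSubtype _)),
    Nat.card_mul_fst_eq_of_ne_zero (neg_ne_zero.2 (inv_ne_zero hα))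
      fun s : SolA n (-α⁻¹) => 1 + 0 * extA s.1.1 1, NA_eq_card_solA]

end Solutions

section ClosedForm
variable {F : Type*} [Field F] [Fintype F] [DecidableEq F]

lemma NA_one (α : F) :
    NA F 1 α = (Fintype.card F - 1) + Fintype.card F * if α = -1 then 1 else 0 := by
  simp [NA_succ, card_zeroFiber_zero, NA_zero, card_erase_of_mem]

lemma NA_add_two {α : F} (hα : α ≠ 0) (n : ℕ) :
    NA F (n + 2) α = ∑ u ∈ univ.erase 0, NA F (n + 1) u + Fintype.card F * NA F n (-α⁻¹) := by
  rw [NA_succ, card_zeroFiber_succ hα]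

local notation "q" => (Fintype.card F : ℤ)

lemma card_erase_zero : ((univ.erase (0 : F)).card : ℤ) = q - 1 := by
  rw [card_erase_of_mem (mem_univ _), card_univ, Nat.cast_pred Fintype.card_pos]

lemma sum_erase_zero_add_ite {c : F} (hc : c ≠ 0) (A B : ℤ) :
    ∑ u ∈ univ.erase 0, (A + if u = c then B else 0) = (q - 1) * A + B := by
  rw [sum_add_distrib, sum_const, sum_ite_eq', if_pos (mem_erase.2 ⟨hc, mem_univ c⟩),
    nsmul_eq_mul, card_erase_zero]

lemma NA_add_two_mul {α : F} (hα : α ≠ 0) (n : ℕ) :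
    (NA F (n + 2) α : ℤ) * (q ^ 2 - 1) =
      ∑ u ∈ univ.erase 0, (NA F (n + 1) u : ℤ) * (q ^ 2 - 1) +
        q * ((NA F n (-α⁻¹) : ℤ) * (q ^ 2 - 1)) := by
  rw [NA_add_two hα]
  push_cast
  rw [add_mul, sum_mul, mul_assoc]

theorem NA_mul_card_sq_sub_one (m : ℕ) :
    (∀ α : F, α ≠ 0 → (NA F (2 * m) α : ℤ) * (q ^ 2 - 1) = q ^ (2 * m + 2) - 1) ∧
    (∀ α : F, α ≠ 0 → (NA F (2 * m + 1) α : ℤ) * (q ^ 2 - 1) =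
      (q ^ (m + 1) - 1) * (q ^ (m + 2) - 1) +
        if α = (-1) ^ (m + 1) then q ^ (m + 1) * (q ^ 2 - 1) else 0) := by
  induction m with
  | zero =>
    have hq : 1 ≤ Fintype.card F := Fintype.card_pos
    refine ⟨fun α _ => by simp [NA_zero], fun α _ => ?_⟩
    simp only [Nat.mul_zero, zero_add, pow_one]
    rw [NA_one]
    split_ifs <;> push_cast [hq] <;> ring
  | succ m ih =>
    have neg_inv_ne_zero {α : F} (hα : α ≠ 0) : -α⁻¹ ≠ 0 := neg_ne_zero.2 (inv_ne_zero hα)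
    have even (α : F) (hα : α ≠ 0) :
        (NA F (2 * m + 2) α : ℤ) * (q ^ 2 - 1) = q ^ (2 * m + 4) - 1 := by
      rw [NA_add_two_mul hα, sum_congr rfl fun u hu => ih.2 u (ne_of_mem_erase hu),
        sum_erase_zero_add_ite (pow_ne_zero _ (neg_ne_zero.2 one_ne_zero)),
        ih.1 _ (neg_inv_ne_zero hα)]
      ring
    refine ⟨fun α hα => by rw [show 2 * (m + 1) = 2 * m + 2 by ring]; exact even α hα,
      fun α hα => ?_⟩
    rw [show 2 * (m + 1) + 1 = 2 * m + 1 + 2 by ring, NA_add_two_mul hα,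
      sum_congr rfl fun u hu => even u (ne_of_mem_erase hu), sum_const, nsmul_eq_mul,
      card_erase_zero, ih.2 _ (neg_inv_ne_zero hα)]
    simp only [neg_inv_eq_neg_one_pow_iff]
    split_ifs <;> ring

end ClosedForm

theorem stmt_11_general (F : Type*) [Field F] [Fintype F] (n : ℕ) (hodd : Odd n) :
    (NA F n ((-1) ^ ((n + 1) / 2)) : ℤ) * ((Fintype.card F : ℤ) ^ 2 - 1) =
      ((Fintype.card F : ℤ) ^ ((n + 1) / 2) - 1) *
        ((Fintype.card F : ℤ) ^ ((n + 3) / 2) - 1) +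
      (Fintype.card F : ℤ) ^ ((n + 1) / 2) * ((Fintype.card F : ℤ) ^ 2 - 1) := by
  classical
  obtain ⟨m, rfl⟩ := hodd
  rw [show (2 * m + 1 + 1) / 2 = m + 1 by omega, show (2 * m + 1 + 3) / 2 = m + 2 by omega]
  have h := (NA_mul_card_sq_sub_one (F := F) m).2 ((-1) ^ (m + 1))
    (pow_ne_zero _ (neg_ne_zero.2 one_ne_zero))
  rwa [if_pos rfl] at h

theorem stmt_11 (F : Type*) [Field F] [Fintype F] (n : ℕ) (hn : 1 ≤ n) (hodd : Odd n) :
    (NA F n ((-1) ^ ((n + 1) / 2)) : ℤ) * ((Fintype.card F : ℤ) ^ 2 - 1) =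
      ((Fintype.card F : ℤ) ^ ((n + 1) / 2) - 1) *
        ((Fintype.card F : ℤ) ^ ((n + 3) / 2) - 1) +
      (Fintype.card F : ℤ) ^ ((n + 1) / 2) * ((Fintype.card F : ℤ) ^ 2 - 1) :=
  stmt_11_general F n hodd
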